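/- Let R = ℤ localized at the prime ideal (2), i.e., the subring {a/b ∈ ℚ : b odd} of ℚ. The class of injective (equivalently, divisible) R-modules is a torsion class in Mod(R), it equals Gen(ℚ ⊕ ℚ/R), and it is not of the form Gen(M) for any finitely generated R-module M. -/

import Mathlib

set_option synthInstance.maxHeartbeats 1000000

/-- A torsion class in `Mod R`: a class of modules closed under isomorphisms, arbitrary
direct sums, quotients and extensions. -/
def IsTorsionClass (R : Type) [Ring R] (T : Set (ModuleCat.{0} R)) : Prop :=
  (∀ M N : ModuleCat.{0} R, Nonempty ((M : Type) ≃ₗ[R] (N : Type)) → M ∈ T → N ∈ T) ∧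
  (∀ (ι : Type) (F : ι → ModuleCat.{0} R), (∀ i, F i ∈ T) →
      ModuleCat.of R (DirectSum ι (fun i => (F i : Type))) ∈ T) ∧
  (∀ M N : ModuleCat.{0} R, M ∈ T →
      (∃ p : (M : Type) →ₗ[R] (N : Type), Function.Surjective p) → N ∈ T) ∧
  (∀ A B C : ModuleCat.{0} R, A ∈ T → C ∈ T →
      (∃ (f : (A : Type) →ₗ[R] (B : Type)) (g : (B : Type) →ₗ[R] (C : Type)),
        Function.Injective f ∧ Function.Surjective g ∧ LinearMap.range f = LinearMap.ker g) →
      B ∈ T)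

/-- `Gen M`: the class of modules which are quotients of (possibly infinite) direct sums
of copies of `M`. -/
def GenClass (R : Type) [Ring R] (M : ModuleCat.{0} R) : Set (ModuleCat.{0} R) :=
  {X | ∃ (ι : Type) (p : (ι →₀ (M : Type)) →ₗ[R] (X : Type)), Function.Surjective p}

/-!
Over a principal ideal domain a module is injective iff it is divisible (Baer's criterion only has
to be checked on principal ideals), and divisibility is inherited by quotients, direct sums and
extensions. Every subring of `ℚ` is a principal ideal domain. An injective `M` is a quotient of
`M →₀ G` whenever `R` embeds in `G`, and `ℚ ⊕ ℚ/R` is divisible with `R ↪ ℚ`. Finally, `2` lies in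
the Jacobson radical of `ℤ₍₂₎`, so by Nakayama a finitely generated divisible module is zero and
cannot generate the nonzero injective module `ℚ`.
-/

universe v

open Function

def IsDivisibleModule (R M : Type*) [CommRing R] [AddCommGroup M] [Module R M] : Prop :=
  ∀ r : R, r ≠ 0 → ∀ m : M, ∃ n : M, r • n = m

namespace IsDivisibleModule

variable {R : Type*} [CommRing R] {M N P : Type*} [AddCommGroup M] [Module R M]
  [AddCommGroup N] [Module R N] [AddCommGroup P] [Module R P]

theorem of_surjective (hM : IsDivisibleModule R M) (f : M →ₗ[R] N) (hf : Surjective f) :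
    IsDivisibleModule R N := by
  intro r hr n
  obtain ⟨m, rfl⟩ := hf n
  obtain ⟨m', rfl⟩ := hM r hr m
  exact ⟨f m', (map_smul f r m').symm⟩

theorem of_exact (hM : IsDivisibleModule R M) (hP : IsDivisibleModule R P)
    (f : M →ₗ[R] N) (g : N →ₗ[R] P) (hg : Surjective g)
    (hfg : LinearMap.range f = LinearMap.ker g) : IsDivisibleModule R N := by
  intro r hr n
  obtain ⟨p, hp⟩ := hP r hr (g n)
  obtain ⟨n', rfl⟩ := hg p
  obtain ⟨m, hm⟩ : n - r • n' ∈ LinearMap.range f := by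
    rw [hfg, LinearMap.mem_ker, map_sub, map_smul, ← hp, sub_self]
  obtain ⟨m', rfl⟩ := hM r hr m
  exact ⟨n' + f m', by rw [smul_add, ← map_smul, hm, add_sub_cancel]⟩

theorem prod (hM : IsDivisibleModule R M) (hN : IsDivisibleModule R N) :
    IsDivisibleModule R (M × N) := by
  rintro r hr ⟨m, n⟩
  obtain ⟨m', rfl⟩ := hM r hr m
  obtain ⟨n', rfl⟩ := hN r hr n
  exact ⟨(m', n'), rfl⟩

theorem directSum {ι : Type*} {F : ι → Type*} [∀ i, AddCommGroup (F i)]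
    [∀ i, Module R (F i)]
    (hF : ∀ i, IsDivisibleModule R (F i)) : IsDivisibleModule R (DirectSum ι F) := by
  classical
  intro r hr x
  induction x using DirectSum.induction_on with
  | zero => exact ⟨0, smul_zero r⟩
  | of i x =>
    obtain ⟨y, rfl⟩ := hF i r hr x
    exact ⟨DirectSum.lof R ι F i y, (map_smul _ r y).symm⟩
  | add x y hx hy =>
    obtain ⟨x', rfl⟩ := hx
    obtain ⟨y', rfl⟩ := hy
    exact ⟨x' + y', smul_add r x' y'⟩

theorem finsupp (hM : IsDivisibleModule R M) (ι : Type*) : IsDivisibleModule R (ι →₀ M) := by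
  classical
  exact (directSum fun _ : ι => hM).of_surjective (finsuppLequivDFinsupp R).symm.toLinearMap
    (finsuppLequivDFinsupp R).symm.surjective

theorem of_field (K : Type*) [Field K] [Algebra R K] [FaithfulSMul R K] :
    IsDivisibleModule R K := by
  intro r hr x
  have hr' : algebraMap R K r ≠ 0 :=
    (map_ne_zero_iff _ (FaithfulSMul.algebraMap_injective R K)).2 hr
  exact ⟨x / algebraMap R K r, by rw [Algebra.smul_def, mul_div_cancel₀ _ hr']⟩

end IsDivisibleModule

section Injective

variable {R : Type*} [CommRing R]

theorem Module.Baer.of_isDivisibleModule [IsPrincipalIdealRing R] {M : Type*} [AddCommGroup M]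
    [Module R M] (hM : IsDivisibleModule R M) : Module.Baer R M := fun I g ↦ by
  obtain ⟨a, rfl⟩ := IsPrincipalIdealRing.principal I
  obtain rfl | ha := eq_or_ne a 0
  · refine ⟨0, fun x hx ↦ ?_⟩
    rw [Submodule.span_zero_singleton] at hx
    subst hx
    exact (map_zero g).symm
  obtain ⟨m, hm⟩ := hM a ha (g ⟨a, Ideal.mem_span_singleton_self a⟩)
  refine ⟨LinearMap.toSpanSingleton R M m, fun x hx ↦ ?_⟩
  obtain ⟨c, rfl⟩ := Ideal.mem_span_singleton'.1 hx
  rw [LinearMap.toSpanSingleton_apply, mul_smul, hm, ← map_smul]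
  rfl

theorem Module.Injective.isDivisibleModule [IsDomain R] [Small.{v} R] (M : Type v)
    [AddCommGroup M] [Module R M] [Module.Injective R M] : IsDivisibleModule R M := by
  intro r hr m
  obtain ⟨h, hh⟩ := Module.Injective.extension_property R M R R
    (LinearMap.toSpanSingleton R R r) (mul_left_injective₀ hr) (LinearMap.toSpanSingleton R M m)
  refine ⟨h 1, ?_⟩
  simpa [← map_smul] using LinearMap.congr_fun hh 1

theorem module_injective_iff_isDivisibleModule [IsDomain R] [IsPrincipalIdealRing R]
    [Small.{v} R] (M : Type v) [AddCommGroup M] [Module R M] :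
    Module.Injective R M ↔ IsDivisibleModule R M :=
  ⟨fun _ ↦ Module.Injective.isDivisibleModule M,
    fun hM ↦ (Module.Baer.of_isDivisibleModule hM).injective⟩

end Injective

section Gen

variable {R : Type} [CommRing R]

theorem mem_genClass_self (M : ModuleCat.{0} R) : M ∈ GenClass R M :=
  ⟨Unit, Finsupp.lapply (), fun m ↦ ⟨Finsupp.single () m, Finsupp.single_eq_same⟩⟩

theorem IsDivisibleModule.of_mem_genClass {G X : ModuleCat.{0} R} (hG : IsDivisibleModule R G)
    (hX : X ∈ GenClass R G) : IsDivisibleModule R X := by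
  obtain ⟨ι, p, hp⟩ := hX
  exact (hG.finsupp ι).of_surjective p hp

theorem subsingleton_of_mem_genClass {G X : ModuleCat.{0} R} [Subsingleton G]
    (hX : X ∈ GenClass R G) : Subsingleton X := by
  obtain ⟨ι, p, hp⟩ := hX
  exact hp.subsingleton

/-- Extending `linearCombination : (M →₀ R) → M` along `(M →₀ R) ↪ (M →₀ G)` gives a surjection. -/
theorem mem_genClass_of_injective {G : ModuleCat.{0} R} (i : R →ₗ[R] G) (hi : Injective i)
    (M : ModuleCat.{0} R) [Module.Injective R M] : M ∈ GenClass R G := by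
  obtain ⟨h, hh⟩ := Module.Injective.extension_property R M (M →₀ R) (M →₀ G)
    (Finsupp.mapRange.linearMap i) (Finsupp.mapRange_injective _ (map_zero i) hi)
    (Finsupp.linearCombination R id)
  refine ⟨M, h, fun m ↦ ?_⟩
  obtain ⟨x, rfl⟩ := Finsupp.linearCombination_id_surjective R M m
  exact ⟨_, LinearMap.congr_fun hh x⟩

theorem setOf_injective_eq_genClass [IsDomain R] [IsPrincipalIdealRing R] {G : ModuleCat.{0} R}
    (hG : IsDivisibleModule R G) (i : R →ₗ[R] G) (hi : Injective i) :
    {M : ModuleCat.{0} R | Module.Injective R M} = GenClass R G := by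
  ext M
  refine ⟨fun hM ↦ ?_, fun hM ↦ ?_⟩
  · have : Module.Injective R M := hM
    exact mem_genClass_of_injective i hi M
  · exact (module_injective_iff_isDivisibleModule M).2 (hG.of_mem_genClass hM)

end Gen

theorem isTorsionClass_setOf_injective (R : Type) [CommRing R] [IsDomain R]
    [IsPrincipalIdealRing R] : IsTorsionClass R {M : ModuleCat.{0} R | Module.Injective R M} := by
  simp only [IsTorsionClass, Set.mem_ofPred_eq, module_injective_iff_isDivisibleModule]
  exact ⟨fun M N ⟨e⟩ hM ↦ hM.of_surjective e.toLinearMap e.surjective,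
    fun ι F hF ↦ .directSum hF,
    fun M N hM ⟨p, hp⟩ ↦ hM.of_surjective p hp,
    fun A B C hA hC ⟨f, g, _, hg, hfg⟩ ↦ hA.of_exact hC f g hg hfg⟩

theorem subsingleton_of_isDivisibleModule {R M : Type*} [CommRing R] [AddCommGroup M]
    [Module R M] [Module.Finite R M] {r : R} (hr0 : r ≠ 0) (hr : r ∈ (⊥ : Ideal R).jacobson)
    (hM : IsDivisibleModule R M) : Subsingleton M := by
  have htop : (⊤ : Submodule R M) ≤ Ideal.span {r} • ⊤ := fun m _ ↦ by
    obtain ⟨n, rfl⟩ := hM r hr0 m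
    exact Submodule.smul_mem_smul (Ideal.mem_span_singleton_self r) trivial
  have hbot := Submodule.eq_bot_of_le_smul_of_le_jacobson_bot _ _ Module.Finite.fg_top htop
    ((Ideal.span_singleton_le_iff_mem _).2 hr)
  exact (Submodule.subsingleton_iff R).1 (subsingleton_of_bot_eq_top hbot.symm)

theorem setOf_injective_ne_genClass_of_finite {R : Type} [CommRing R] [IsDomain R] {r : R}
    (hr0 : r ≠ 0) (hr : r ∈ (⊥ : Ideal R).jacobson) {N : ModuleCat.{0} R} [Nontrivial N]
    [Module.Injective R N] (M : ModuleCat.{0} R) [Module.Finite R M] :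
    {X : ModuleCat.{0} R | Module.Injective R X} ≠ GenClass R M := by
  intro h
  have : Module.Injective R M := (Set.ext_iff.1 h M).2 (mem_genClass_self M)
  have := subsingleton_of_isDivisibleModule hr0 hr (Module.Injective.isDivisibleModule M)
  exact not_subsingleton N (subsingleton_of_mem_genClass (G := M) ((Set.ext_iff.1 h N).1 ‹_›))

namespace Subring

theorem inv_den_mem {R : Subring ℚ} {x : ℚ} (hx : x ∈ R) : (x.den : ℚ)⁻¹ ∈ R := by
  obtain ⟨u, v, huv⟩ : IsCoprime x.num x.den := Int.isCoprime_iff_gcd_eq_one.2 x.reduced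
  have hinv : (x.den : ℚ)⁻¹ = u * x + v := by
    have huv' : (u * x.num + v * x.den : ℚ) = 1 := by exact_mod_cast huv
    field_simp
    linear_combination -huv' - u * Rat.mul_den_eq_num x
  rw [hinv]
  exact add_mem (mul_mem (intCast_mem R u) hx) (intCast_mem R v)

instance isPrincipalIdealRing_rat (R : Subring ℚ) : IsPrincipalIdealRing R where
  principal I := by
    obtain ⟨n, hn⟩ := (IsPrincipalIdealRing.principal (I.comap (Int.castRingHom R))).principal
    refine ⟨n, le_antisymm (fun x hx ↦ ?_) ?_⟩
    · have hnum : ((x : ℚ).num : R) = x * ((x : ℚ).den : R) := by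
        ext; push_cast; exact (Rat.mul_den_eq_num x).symm
      have hnumI : (x : ℚ).num ∈ I.comap (Int.castRingHom R) := by
        simpa [hnum] using I.mul_mem_right _ hx
      rw [hn] at hnumI
      obtain ⟨c, hc⟩ := Ideal.mem_span_singleton.1 hnumI
      refine Ideal.mem_span_singleton'.2 ⟨c * ⟨_, inv_den_mem x.2⟩, ?_⟩
      ext
      push_cast
      have hc' : ((x : ℚ).num : ℚ) = n * c := by exact_mod_cast hc
      conv_rhs => rw [← Rat.num_div_den (x : ℚ), hc']
      ring
    · rw [Submodule.span_le, Set.singleton_subset_iff]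
      exact (hn ▸ Ideal.mem_span_singleton_self n : n ∈ I.comap (Int.castRingHom R))

end Subring

/-- `1 + 2 (a / b) = (2 a + b) / b` has odd numerator and denominator, so it is a unit. -/
theorem two_mem_jacobson_bot {R : Subring ℚ}
    (hR : ∀ x : ℚ, x ∈ R ↔ ∃ a b : ℤ, Odd b ∧ x = (a : ℚ) / (b : ℚ)) :
    (2 : R) ∈ (⊥ : Ideal R).jacobson := by
  rw [Ideal.mem_jacobson_bot]
  intro y
  obtain ⟨a, b, hb, hy⟩ := (hR y).1 y.2
  have hodd : Odd (2 * a + b) := (even_two_mul a).add_odd hb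
  have hb0 : (b : ℚ) ≠ 0 := by
    exact_mod_cast show b ≠ 0 by rintro rfl; simp at hb
  have hab0 : (2 * a + b : ℚ) ≠ 0 := by
    exact_mod_cast show 2 * a + b ≠ 0 by rintro h; simp [h] at hodd
  have hinv : (b / (2 * a + b) : ℚ) ∈ R := (hR _).2 ⟨b, 2 * a + b, hodd, by push_cast; rfl⟩
  refine IsUnit.of_mul_eq_one ⟨_, hinv⟩ ?_
  ext
  push_cast [hy, show ((2 : R) : ℚ) = 2 from rfl]
  field_simp

/-- Over the localisation `R` of `ℤ` at the prime `(2)` (realised as the subring of `ℚ`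
of fractions with odd denominator), the class of injective `R`-modules is a torsion
class, it equals `Gen (ℚ ⊕ ℚ/R)`, and it is not generated by any finitely generated
module. -/
theorem injective_modules_torsion_class_of_Z_localised_at_two
    (R : Subring ℚ) (hR : ∀ x : ℚ, x ∈ R ↔ ∃ a b : ℤ, Odd b ∧ x = (a : ℚ) / (b : ℚ)) :
    IsTorsionClass ↥R {M : ModuleCat.{0} ↥R | Module.Injective ↥R M} ∧
    {M : ModuleCat.{0} ↥R | Module.Injective ↥R M} =
      GenClass ↥R (ModuleCat.of ↥R (Prod ℚ (ℚ ⧸ Submodule.span ↥R {(1 : ℚ)}))) ∧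
    ¬ ∃ M : ModuleCat.{0} ↥R, Module.Finite ↥R M ∧
        {N : ModuleCat.{0} ↥R | Module.Injective ↥R N} = GenClass ↥R M := by
  have hℚ : IsDivisibleModule R ℚ := .of_field ℚ
  have hG : IsDivisibleModule R (ℚ × (ℚ ⧸ Submodule.span R {(1 : ℚ)})) :=
    hℚ.prod (hℚ.of_surjective _ (Submodule.mkQ_surjective _))
  have hi : Injective
      (LinearMap.inl R ℚ (ℚ ⧸ Submodule.span R {(1 : ℚ)}) ∘ₗ Algebra.linearMap R ℚ) :=
    LinearMap.inl_injective.comp (FaithfulSMul.algebraMap_injective R ℚ)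
  have : Module.Injective R ℚ := (module_injective_iff_isDivisibleModule ℚ).2 hℚ
  refine ⟨isTorsionClass_setOf_injective R, setOf_injective_eq_genClass hG _ hi, ?_⟩
  rintro ⟨M, _, hM⟩
  exact setOf_injective_ne_genClass_of_finite two_ne_zero (two_mem_jacobson_bot hR)
    (N := ModuleCat.of R ℚ) M hM
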